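/- Fix R > 0 and R_0 as above, and let G = sup over admissible ω and R_0 ≤ |z| ≤ R̃_0 of g_ω(z), which is finite. Let ω be admissible and z a point in the escaping set with |z| < R_0, and let k = k(z,ω) be the first time |f^k_ω(z)| ≥ R_0. Then (log R_0 − 1)·2^{−k} ≤ g_ω(z) ≤ 2(log R_0 + 1)·2^{−k}. -/

import Mathlib

open Filter MeasureTheory Topology

/-- Non-autonomous iteration of quadratic maps: `fiter c (n+1) z = (fiter c n z)^2 + c n`. -/
noncomputable def fiter (c : ℕ → ℂ) : ℕ → ℂ → ℂ
  | 0, z => z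
  | n + 1, z => (fiter c n z) ^ 2 + c n

/-- The Green's function, defined via limsup of `2^{-n} log |f^n_ω(z)|`. -/
noncomputable def green (c : ℕ → ℂ) (z : ℂ) : ℝ :=
  Filter.limsup (fun n => (1 / 2 ^ n : ℝ) * Real.log (‖fiter c n z‖)) Filter.atTop

lemma fiter_congr (c c' : ℕ → ℂ) (z : ℂ) : ∀ n, (∀ j < n, c j = c' j) → fiter c n z = fiter c' n z := by
  intro n
  induction n with
  | zero => intro _; rfl
  | succ n ih =>
    intro h
    simp only [fiter, ih (fun j hj => h j (by omega)), h n (by omega)]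

lemma fiter_add (c : ℕ → ℂ) (j : ℕ) (z : ℂ) :
    ∀ m, fiter c (j + m) z = fiter (fun i => c (j + i)) m (fiter c j z) := by
  intro m
  induction m with
  | zero => rfl
  | succ m ih =>
    show fiter c ((j + m) + 1) z = _
    simp only [fiter, ih]

lemma fiter_continuous (c : ℕ → ℂ) (n : ℕ) : Continuous (fun z => fiter c n z) := by
  induction n with
  | zero => exact continuous_id
  | succ n ih => exact (ih.pow 2).add continuous_const

lemma fiter_zero_tail (c : ℕ → ℂ) (m : ℕ) (hm : ∀ i, m ≤ i → c i = 0) (z : ℂ) :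
    ∀ p, fiter c (m + p) z = (fiter c m z) ^ (2 ^ p) := by
  intro p
  induction p with
  | zero => simp
  | succ p ih =>
    have : m + (p + 1) = (m + p) + 1 := by omega
    rw [this]
    simp only [fiter, ih, hm (m + p) (by omega), add_zero, ← pow_mul]
    ring_nf

/-- Key adversarial consequence of `hasym`: probing with a zero tail. -/
lemma probe (R R₀ : ℝ) (hR : 0 < R) (hR₀ : 1 < R₀)
    (hasym : ∀ ν : ℕ → ℂ, (∀ n, ‖ν n‖ < R) →
      ∀ w : ℂ, R₀ < ‖w‖ → |green ν w - Real.log (‖w‖)| < 1)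
    (ν : ℕ → ℂ) (hν : ∀ n, ‖ν n‖ < R)
    (w : ℂ) (hw : R₀ < ‖w‖) (m : ℕ) :
    |(1 / 2 ^ m : ℝ) * Real.log (‖fiter ν m w‖) - Real.log (‖w‖)| < 1 := by
  set μ : ℕ → ℂ := fun j => if j < m then ν j else 0 with hμdef
  have hμ : ∀ n, ‖μ n‖ < R := by
    intro n
    by_cases h : n < m <;> simp [hμdef, h, hR, hν n]
  have hμm : fiter μ m w = fiter ν m w :=
    fiter_congr μ ν w m (fun j hj => by simp [hμdef, hj])
  have htail : ∀ p, fiter μ (m + p) w = (fiter ν m w) ^ (2 ^ p) := by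
    intro p
    rw [fiter_zero_tail μ m (fun i hi => by simp [hμdef, Nat.not_lt.mpr hi]) w p, hμm]
  have hgreen : green μ w = (1 / 2 ^ m : ℝ) * Real.log (‖fiter ν m w‖) := by
    have hev : ∀ᶠ n in atTop, (1 / 2 ^ n : ℝ) * Real.log (‖fiter μ n w‖) =
        (1 / 2 ^ m : ℝ) * Real.log (‖fiter ν m w‖) := by
      filter_upwards [eventually_ge_atTop m] with n hn
      obtain ⟨p, rfl⟩ := Nat.exists_eq_add_of_le hn
      rw [htail p, norm_pow, Real.log_pow]
      have : ((2:ℝ) ^ p) ≠ 0 := by positivity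
      field_simp [pow_add]
      push_cast
      ring
    rw [green, limsup_congr hev, limsup_const]
  have := hasym μ hμ w hw
  rwa [hgreen] at this

lemma small_c (R R₀ : ℝ) (hR : 0 < R) (hR₀ : 1 < R₀)
    (hasym : ∀ ν : ℕ → ℂ, (∀ n, ‖ν n‖ < R) →
      ∀ w : ℂ, R₀ < ‖w‖ → |green ν w - Real.log (‖w‖)| < 1)
    (c₀ : ℂ) (hc₀ : ‖c₀‖ < R) : ‖c₀‖ ≤ R₀ ^ 2 := by
  by_contra h
  push_neg at h
  set a := ‖c₀‖ with ha
  have ha0 : 0 < a := lt_trans (by positivity) h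
  set ε : ℝ := min ((a - R₀ ^ 2) / 2) (a * Real.exp (-2) / 2) with hε
  have hε0 : 0 < ε := by
    apply lt_min
    · linarith
    · positivity
  have hεa2 : ε ≤ a * Real.exp (-2) / 2 := min_le_right _ _
  have hexp2 : Real.exp (-2) ≤ 1 := Real.exp_le_one_iff.mpr (by norm_num)
  have hεhalf : ε ≤ a / 2 := le_trans hεa2 (by nlinarith)
  -- the point w : a square root of ((ε/a - 1) : ℝ) • c₀
  obtain ⟨w, hw⟩ := IsAlgClosed.exists_pow_nat_eq ((((ε / a : ℝ) - 1 : ℝ) : ℂ) * c₀) (n := 2) (by norm_num)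
  have hw2abs : ‖w ^ 2‖ = a - ε := by
    have hnp : (ε / a - 1 : ℝ) ≤ 0 := by
      have : ε / a ≤ 1 := by
        rw [div_le_one ha0]; linarith
      linarith
    rw [hw, norm_mul, Complex.norm_real, Real.norm_eq_abs, ← ha, abs_of_nonpos hnp]
    field_simp
    ring
  have hwabs2 : ‖w‖ ^ 2 = a - ε := by rw [← hw2abs, norm_pow]
  have hwgt : R₀ < ‖w‖ := by
    have h1 : R₀ ^ 2 < ‖w‖ ^ 2 := by
      rw [hwabs2]
      have : ε ≤ (a - R₀ ^ 2) / 2 := min_le_left _ _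
      linarith
    nlinarith [norm_nonneg w]
  have himg : ‖w ^ 2 + c₀‖ = ε := by
    have : w ^ 2 + c₀ = ((ε / a : ℝ) : ℂ) * c₀ := by rw [hw]; push_cast; ring
    rw [this, norm_mul, Complex.norm_real, Real.norm_eq_abs, ← ha, abs_of_nonneg (by positivity)]
    field_simp
  have hprobe := probe R R₀ hR hR₀ hasym (fun _ => c₀) (fun _ => hc₀) w hwgt 1
  have hfit1 : fiter (fun _ => c₀) 1 w = w ^ 2 + c₀ := rfl
  rw [hfit1, himg] at hprobe
  have hlogw : Real.log (‖w‖) = Real.log (a - ε) / 2 := by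
    have : Real.log (‖w‖ ^ 2) = Real.log (a - ε) := by rw [hwabs2]
    rw [Real.log_pow] at this
    push_cast at this
    linarith
  rw [abs_lt] at hprobe
  have hlow : Real.log (a - ε) / 2 - 1 < (1 / 2 : ℝ) * Real.log ε := by
    have := hprobe.1
    rw [hlogw] at this
    norm_num at this ⊢
    linarith
  -- hence log ε > log (a - ε) - 2, so ε > (a-ε) e^{-2} ≥ (a/2) e^{-2} ≥ ε : contradiction
  have haε : 0 < a - ε := by linarith
  have : Real.log (a - ε) - 2 < Real.log ε := by linarith
  have hgt : (a - ε) * Real.exp (-2) < ε := by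
    have h1 : Real.exp (Real.log (a - ε) - 2) < Real.exp (Real.log ε) := Real.exp_lt_exp.mpr this
    rw [Real.exp_sub, Real.exp_log haε, Real.exp_log hε0] at h1
    rw [Real.exp_neg, ← div_eq_mul_inv]
    exact h1
  nlinarith [Real.exp_pos (-2 : ℝ)]

lemma probe_lower (R R₀ : ℝ) (hR : 0 < R) (hR₀ : 1 < R₀)
    (hasym : ∀ ν : ℕ → ℂ, (∀ n, ‖ν n‖ < R) →
      ∀ w : ℂ, R₀ < ‖w‖ → |green ν w - Real.log (‖w‖)| < 1)
    (ν : ℕ → ℂ) (hν : ∀ n, ‖ν n‖ < R)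
    (w : ℂ) (hw : R₀ ≤ ‖w‖) (m : ℕ) (hnz : fiter ν m w ≠ 0) :
    2 ^ m * (Real.log (‖w‖) - 1) ≤ Real.log (‖fiter ν m w‖) := by
  have hw0 : 0 < ‖w‖ := lt_of_lt_of_le (by linarith) hw
  set B₀ : ℝ := 2 ^ m * (Real.log (‖w‖) - 1) with hB₀
  set wt : ℕ → ℂ := fun t => ((1 + 1 / (t + 1) : ℝ) : ℂ) * w with hwt
  have hct : ∀ t : ℕ, (1 : ℝ) < 1 + 1 / (t + 1) := by
    intro t
    have : (0:ℝ) < 1 / (t + 1) := by positivity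
    linarith
  have hwtabs : ∀ t, ‖wt t‖ = (1 + 1 / (t + 1 : ℝ)) * ‖w‖ := by
    intro t
    rw [hwt, norm_mul, Complex.norm_real, Real.norm_eq_abs, abs_of_pos (by linarith [hct t])]
  have hwtgt : ∀ t, R₀ < ‖wt t‖ := by
    intro t
    rw [hwtabs t]
    nlinarith [hct t]
  have hstep : ∀ t, B₀ < Real.log (‖fiter ν m (wt t)‖) := by
    intro t
    have hp := (abs_lt.mp (probe R R₀ hR hR₀ hasym ν hν (wt t) (hwtgt t) m)).1
    have hlogmono : Real.log (‖w‖) ≤ Real.log (‖wt t‖) :=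
      Real.log_le_log hw0 (by rw [hwtabs t]; nlinarith [hct t])
    have h2m : (0:ℝ) < 2 ^ m := by positivity
    rw [hB₀]
    have h1 : Real.log (‖wt t‖) - 1 <
        (1 / 2 ^ m : ℝ) * Real.log (‖fiter ν m (wt t)‖) := by linarith
    calc 2 ^ m * (Real.log (‖w‖) - 1)
        ≤ 2 ^ m * (Real.log (‖wt t‖) - 1) := by nlinarith
      _ < 2 ^ m * ((1 / 2 ^ m : ℝ) * Real.log (‖fiter ν m (wt t)‖)) := by nlinarith
      _ = Real.log (‖fiter ν m (wt t)‖) := by field_simp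
  -- continuity: fiter ν m (wt t) → fiter ν m w
  have htend : Tendsto (fun t : ℕ => ‖fiter ν m (wt t)‖) atTop
      (𝓝 (‖fiter ν m w‖)) := by
    have h1 : Tendsto (fun t : ℕ => (1 + 1 / (t + 1 : ℝ))) atTop (𝓝 1) := by
      have : Tendsto (fun n : ℕ => 1 / ((n : ℝ) + 1)) atTop (𝓝 0) := tendsto_one_div_add_atTop_nhds_zero_nat
      have h2 := this.const_add (1 : ℝ)
      simpa using h2
    have h2 : Tendsto (fun t : ℕ => wt t) atTop (𝓝 w) := by
      have h3 : Tendsto (fun t : ℕ => (((1 + 1 / (t + 1 : ℝ)) : ℝ) : ℂ)) atTop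
          (𝓝 (((1:ℝ) : ℂ))) := (Complex.continuous_ofReal.tendsto _).comp h1
      have h4 := h3.mul (tendsto_const_nhds (x := w))
      simpa [hwt] using h4
    exact (continuous_norm.tendsto _).comp (((fiter_continuous ν m).tendsto w).comp h2)
  have habs0 : 0 < ‖fiter ν m w‖ := by
    simpa [norm_pos_iff] using hnz
  have hev : ∀ᶠ t in atTop, Real.exp B₀ ≤ ‖fiter ν m (wt t)‖ := by
    filter_upwards [htend.eventually (eventually_gt_nhds
      (show ‖fiter ν m w‖ / 2 < ‖fiter ν m w‖ by linarith))] with t ht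
    have hpos : 0 < ‖fiter ν m (wt t)‖ := by
      have : 0 < ‖fiter ν m w‖ / 2 := by positivity
      linarith
    have := hstep t
    have : Real.exp B₀ < Real.exp (Real.log (‖fiter ν m (wt t)‖)) := Real.exp_lt_exp.mpr this
    rw [Real.exp_log hpos] at this
    exact this.le
  have hfin : Real.exp B₀ ≤ ‖fiter ν m w‖ := ge_of_tendsto htend hev
  calc B₀ = Real.log (Real.exp B₀) := (Real.log_exp B₀).symm
    _ ≤ Real.log (‖fiter ν m w‖) := Real.log_le_log (Real.exp_pos _) hfin

lemma disk_bound (R R₀ : ℝ) (hR : 0 < R) (hR₀ : 1 < R₀)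
    (hasym : ∀ ν : ℕ → ℂ, (∀ n, ‖ν n‖ < R) →
      ∀ w : ℂ, R₀ < ‖w‖ → |green ν w - Real.log (‖w‖)| < 1)
    (ν : ℕ → ℂ) (hν : ∀ n, ‖ν n‖ < R)
    (v : ℂ) (hv : ‖v‖ < R₀) (n : ℕ) :
    (1 / 2 ^ n : ℝ) * Real.log (‖fiter ν n v‖) ≤ Real.log R₀ + 1 := by
  have hlogR₀ : 0 < Real.log R₀ := Real.log_pos hR₀
  set u : ℕ → ℂ := fun j => fiter ν j v with hu
  by_cases hex : ∃ j, j ≤ n ∧ R₀ < ‖u j‖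
  · -- there is a first exit time j, 1 ≤ j ≤ n
    obtain ⟨j₀, hj₀n, hj₀⟩ := hex
    have hexQ : ∃ j, R₀ < ‖u j‖ := ⟨j₀, hj₀⟩
    classical
    obtain ⟨j, hPj, hmin⟩ : ∃ j, R₀ < ‖u j‖ ∧ ∀ i < j, ¬ R₀ < ‖u i‖ :=
      ⟨Nat.find hexQ, Nat.find_spec hexQ, fun i hi => Nat.find_min hexQ hi⟩
    have hjle : j ≤ n := le_trans (not_lt.mp (fun h => hmin j₀ h hj₀)) hj₀n
    have hj0 : j ≠ 0 := by
      intro h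
      rw [h] at hPj
      exact absurd hPj (not_lt.mpr (le_of_lt (by simpa [hu, fiter] using hv)))
    obtain ⟨i, rfl⟩ : ∃ i, j = i + 1 := ⟨j - 1, by omega⟩
    have hprev : ‖u i‖ ≤ R₀ := le_of_not_gt (hmin i (by omega))
    -- bound |u (i+1)| ≤ 2 R₀²
    have hujbound : ‖u (i + 1)‖ ≤ 2 * R₀ ^ 2 := by
      have : u (i + 1) = (u i) ^ 2 + ν i := rfl
      rw [this]
      calc ‖(u i) ^ 2 + ν i‖ ≤ ‖(u i) ^ 2‖ + ‖ν i‖ :=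
            norm_add_le _ _
        _ ≤ R₀ ^ 2 + R₀ ^ 2 := by
            rw [norm_pow]
            have h1 : ‖u i‖ ^ 2 ≤ R₀ ^ 2 := by
              nlinarith [norm_nonneg (u i)]
            have h2 := small_c R R₀ hR hR₀ hasym (ν i) (hν i)
            linarith
        _ = 2 * R₀ ^ 2 := by ring
    -- probe from u (i+1)
    have hcomp : fiter ν n v = fiter (fun t => ν ((i + 1) + t)) (n - (i + 1)) (u (i + 1)) := by
      rw [hu]
      have : n = (i + 1) + (n - (i + 1)) := by omega
      rw [this, fiter_add]
      congr 1
      omega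
    have hp := (abs_lt.mp (probe R R₀ hR hR₀ hasym (fun t => ν ((i + 1) + t))
      (fun t => hν _) (u (i + 1)) hPj (n - (i + 1)))).2
    rw [← hcomp] at hp
    have hloguj : Real.log (‖u (i + 1)‖) ≤ Real.log 2 + 2 * Real.log R₀ := by
      have h1 : Real.log (‖u (i + 1)‖) ≤ Real.log (2 * R₀ ^ 2) :=
        Real.log_le_log (by linarith) hujbound
      rw [Real.log_mul (by norm_num) (by positivity), Real.log_pow] at h1
      push_cast at h1
      linarith
    have hlog2 : Real.log 2 < 1 := by
      have := Real.log_two_lt_d9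
      linarith
    have hkey : (1 / 2 ^ (n - (i + 1)) : ℝ) * Real.log (‖fiter ν n v‖) <
        2 * Real.log R₀ + 2 := by linarith
    -- multiply by 1/2^{i+1} ≤ 1/2
    have h2i : (0:ℝ) < 2 ^ (i + 1) := by positivity
    have hsplit : (1 / 2 ^ n : ℝ) = (1 / 2 ^ (i + 1)) * (1 / 2 ^ (n - (i + 1))) := by
      rw [div_mul_div_comm, one_mul, ← pow_add]
      congr 2
      omega
    have hhalf : (1 / 2 ^ (i + 1) : ℝ) ≤ 1 / 2 := by
      apply div_le_div_of_nonneg_left (by norm_num) (by norm_num)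
      calc (2:ℝ) = 2 ^ 1 := (pow_one 2).symm
        _ ≤ 2 ^ (i + 1) := by
            apply pow_le_pow_right₀ (by norm_num)
            omega
    calc (1 / 2 ^ n : ℝ) * Real.log (‖fiter ν n v‖)
        = (1 / 2 ^ (i + 1)) * ((1 / 2 ^ (n - (i + 1))) * Real.log (‖fiter ν n v‖)) := by
          rw [hsplit]; ring
      _ ≤ (1 / 2 ^ (i + 1)) * (2 * Real.log R₀ + 2) := by
          apply mul_le_mul_of_nonneg_left hkey.le (by positivity)
      _ ≤ (1 / 2) * (2 * Real.log R₀ + 2) := by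
          apply mul_le_mul_of_nonneg_right hhalf (by linarith)
      _ = Real.log R₀ + 1 := by ring
  · -- the whole orbit up to n stays in the disk
    push_neg at hex
    have hn : ‖u n‖ ≤ R₀ := hex n le_rfl
    have hlogun : Real.log (‖u n‖) ≤ Real.log R₀ := by
      rcases eq_or_lt_of_le (norm_nonneg (u n)) with h | h
      · rw [← h, Real.log_zero]; linarith
      · exact Real.log_le_log h hn
    have h2n : (0:ℝ) < 1 / 2 ^ n := by positivity
    have h2n1 : (1 / 2 ^ n : ℝ) ≤ 1 := by
      rw [div_le_one (by positivity)]
      have := pow_le_pow_right₀ (by norm_num : (1:ℝ) ≤ 2) (Nat.zero_le n)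
      simpa using this
    rcases le_or_gt (Real.log (‖u n‖)) 0 with h | h
    · nlinarith
    · nlinarith

theorem stmt7 (R R₀ : ℝ) (hR : 0 < R) (hR₀ : 1 < R₀)
    (hasym : ∀ ν : ℕ → ℂ, (∀ n, ‖ν n‖ < R) →
      ∀ w : ℂ, R₀ < ‖w‖ → |green ν w - Real.log (‖w‖)| < 1)
    (c : ℕ → ℂ) (hc : ∀ n, ‖c n‖ < R)
    (z : ℂ) (hz : ‖z‖ < R₀)
    (hesc : Filter.Tendsto (fun n => ‖fiter c n z‖) Filter.atTop Filter.atTop)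
    (k : ℕ) (hk1 : ∀ j < k, ‖fiter c j z‖ < R₀)
    (hk2 : R₀ ≤ ‖fiter c k z‖) :
    (Real.log R₀ - 1) * (1 / 2 ^ k) ≤ green c z ∧
      green c z ≤ 2 * (Real.log R₀ + 1) * (1 / 2 ^ k) := by
  have hlogR₀ : 0 < Real.log R₀ := Real.log_pos hR₀
  set A : ℕ → ℝ := fun n => ‖fiter c n z‖ with hA
  set b : ℕ → ℝ := fun n => (1 / 2 ^ n : ℝ) * Real.log (A n) with hb
  -- eventually the orbit is above R₀
  obtain ⟨N, hN⟩ : ∃ N, ∀ n ≥ N, R₀ < A n :=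
    (hesc.eventually_gt_atTop R₀).exists_forall_of_atTop
  -- one-step estimate above R₀
  have hstep1 : ∀ n, N ≤ n → |(1 / 2 : ℝ) * Real.log (A (n + 1)) - Real.log (A n)| < 1 := by
    intro n hn
    have hcomp : fiter c (n + 1) z = fiter (fun i => c (n + i)) 1 (fiter c n z) :=
      fiter_add c n z 1
    have hp := probe R R₀ hR hR₀ hasym (fun i => c (n + i)) (fun i => hc _)
      (fiter c n z) (hN n hn) 1
    rw [← hcomp] at hp
    simpa using hp
  -- the shifted sequence is Cauchy
  have hcauchy : CauchySeq (fun t => b (t + N)) := by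
    apply cauchySeq_of_le_geometric (1 / 2 : ℝ) (1 / 2 ^ N) (by norm_num)
    intro t
    have h1 := hstep1 (t + N) (by omega)
    rw [Real.dist_eq]
    have hidx : t + 1 + N = t + N + 1 := by omega
    rw [hidx]
    have he : b (t + N) - b (t + N + 1) =
        (1 / 2 ^ (t + N) : ℝ) * (Real.log (A (t + N)) - (1 / 2) * Real.log (A (t + N + 1))) := by
      rw [hb]
      simp only []
      rw [pow_succ]
      ring
    rw [he, abs_mul, abs_of_pos (show (0:ℝ) < 1 / 2 ^ (t + N) by positivity)]
    have h2 : |Real.log (A (t + N)) - 1 / 2 * Real.log (A (t + N + 1))| ≤ 1 := by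
      rw [abs_sub_comm]
      exact h1.le
    calc (1 / 2 ^ (t + N) : ℝ) * |Real.log (A (t + N)) - 1 / 2 * Real.log (A (t + N + 1))|
        ≤ (1 / 2 ^ (t + N) : ℝ) * 1 := by
          apply mul_le_mul_of_nonneg_left h2 (by positivity)
      _ = 1 / 2 ^ N * (1 / 2) ^ t := by
          rw [mul_one, pow_add]
          rw [div_pow, one_pow]
          rw [div_mul_div_comm, one_mul]
          ring_nf
  obtain ⟨L, hL⟩ := cauchySeq_tendsto_of_complete hcauchy
  have hbL : Tendsto b atTop (𝓝 L) := (tendsto_add_atTop_iff_nat N).mp hL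
  have hgreenL : green c z = L := by
    have : green c z = limsup b atTop := rfl
    rw [this, hbL.limsup_eq]
  -- shifted limits
  have hshift : ∀ j, Tendsto (fun m => (1 / 2 ^ m : ℝ) * Real.log (A (j + m))) atTop
      (𝓝 (2 ^ j * L)) := by
    intro j
    have h1 : Tendsto (fun m => b (j + m)) atTop (𝓝 L) := by
      have := (tendsto_add_atTop_iff_nat j).mpr hbL
      simpa [Nat.add_comm] using this
    have h2 := h1.const_mul ((2:ℝ) ^ j)
    have he : (fun m => (2:ℝ) ^ j * b (j + m)) =
        fun m => (1 / 2 ^ m : ℝ) * Real.log (A (j + m)) := by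
      funext m
      rw [hb]
      simp only []
      rw [pow_add]
      have h2j : ((2:ℝ) ^ j) ≠ 0 := by positivity
      have h2m : ((2:ℝ) ^ m) ≠ 0 := by positivity
      field_simp
    rwa [he] at h2
  constructor
  · -- lower bound
    have hklim := hshift k
    have hev : ∀ᶠ m in atTop, Real.log R₀ - 1 ≤ (1 / 2 ^ m : ℝ) * Real.log (A (k + m)) := by
      filter_upwards [eventually_ge_atTop N] with m hm
      have hcomp : fiter c (k + m) z = fiter (fun i => c (k + i)) m (fiter c k z) :=
        fiter_add c k z m
      have hnz : fiter (fun i => c (k + i)) m (fiter c k z) ≠ 0 := by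
        rw [← hcomp]
        intro h0
        have := hN (k + m) (by omega)
        rw [hA] at this
        simp only [h0] at this
        simp at this
        linarith
      have hpl := probe_lower R R₀ hR hR₀ hasym (fun i => c (k + i)) (fun i => hc _)
        (fiter c k z) hk2 m hnz
      rw [← hcomp] at hpl
      have hlogk : Real.log R₀ ≤ Real.log (A k) := Real.log_le_log (by linarith) hk2
      have h2m : (0:ℝ) < 2 ^ m := by positivity
      have h3 : 2 ^ m * (Real.log R₀ - 1) ≤ Real.log (A (k + m)) := by
        calc (2:ℝ) ^ m * (Real.log R₀ - 1) ≤ 2 ^ m * (Real.log (A k) - 1) := by nlinarith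
          _ ≤ Real.log (A (k + m)) := hpl
      calc Real.log R₀ - 1 = (1 / 2 ^ m : ℝ) * (2 ^ m * (Real.log R₀ - 1)) := by field_simp
        _ ≤ (1 / 2 ^ m : ℝ) * Real.log (A (k + m)) := by
            apply mul_le_mul_of_nonneg_left h3 (by positivity)
    have hge : Real.log R₀ - 1 ≤ 2 ^ k * L := ge_of_tendsto hklim hev
    rw [hgreenL]
    have h2k : (0:ℝ) < 2 ^ k := by positivity
    rw [mul_one_div, div_le_iff₀ h2k]
    linarith [hge]
  · -- upper bound
    rw [hgreenL]
    rcases Nat.eq_zero_or_eq_succ_pred k with hk0 | hksucc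
    · subst hk0
      have hub : ∀ m, b m ≤ Real.log R₀ + 1 := fun m =>
        disk_bound R R₀ hR hR₀ hasym c hc z hz m
      have : L ≤ Real.log R₀ + 1 := le_of_tendsto hbL (Eventually.of_forall hub)
      simp only [pow_zero]
      nlinarith
    · set j := k - 1 with hjdef
      rw [hksucc]
      have hvlt : A j < R₀ := hk1 j (by omega)
      have hub : ∀ m, (1 / 2 ^ m : ℝ) * Real.log (A (j + m)) ≤ Real.log R₀ + 1 := by
        intro m
        have hcomp : fiter c (j + m) z = fiter (fun i => c (j + i)) m (fiter c j z) :=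
          fiter_add c j z m
        have := disk_bound R R₀ hR hR₀ hasym (fun i => c (j + i)) (fun i => hc _)
          (fiter c j z) hvlt m
        rw [← hcomp] at this
        exact this
      have h2jL : 2 ^ j * L ≤ Real.log R₀ + 1 :=
        le_of_tendsto (hshift j) (Eventually.of_forall hub)
      have h2j : (0:ℝ) < 2 ^ j := by positivity
      rw [mul_one_div, le_div_iff₀ (by positivity)]
      have hpow : (2:ℝ) ^ (j + 1) = 2 * 2 ^ j := by rw [pow_succ]; ring
      calc L * 2 ^ (j + 1) = (2 ^ j * L) * 2 := by rw [hpow]; ring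
        _ ≤ (Real.log R₀ + 1) * 2 := by nlinarith
        _ = 2 * (Real.log R₀ + 1) := by ring
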